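/- Assume the rotation map σ has no fixed points. Let a : V → ℝ be a nonzero vector and φ a real number with 0 < φ < π such that Σ_{v∈V} A(u,v)·a_v = cos(φ)·a_u for all u ∈ V. Then there exists a nonzero vector Φ ∈ ℂ^(V × {0,…,d−1}) with W Φ = e^{iφ} Φ and ⟨ψ_u, Φ⟩ = a_u for all u ∈ V, and likewise there exists a nonzero vector Φ' with W Φ' = e^{−iφ} Φ' and ⟨ψ_u, Φ'⟩ = a_u for all u ∈ V. -/

import Mathlib

open scoped InnerProductSpace
open Complex

/-- The coin state `ψ_u = (1/√d) Σ_g e_{(u,g)}`. -/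
noncomputable def psiState (V : Type*) [Fintype V] [DecidableEq V] (d : ℕ) (u : V) :
    EuclideanSpace ℂ (V × Fin d) :=
  WithLp.toLp 2 (fun x : V × Fin d => if x.1 = u then ((1 / Real.sqrt d : ℝ) : ℂ) else 0)

/-- The coin operator `C = 2 Σ_u |ψ_u⟩⟨ψ_u| − I` applied to a vector. -/
noncomputable def coinOp {V : Type*} [Fintype V] [DecidableEq V] {d : ℕ}
    (Φ : EuclideanSpace ℂ (V × Fin d)) : EuclideanSpace ℂ (V × Fin d) :=
  (2 : ℂ) • (∑ u : V, ⟪psiState V d u, Φ⟫_ℂ • psiState V d u) - Φ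

/-- The flip-flop walk operator `W = S C`, where `S e_x = e_{σ(x)}`. -/
noncomputable def walkOp {V : Type*} [Fintype V] [DecidableEq V] {d : ℕ}
    (σ : V × Fin d → V × Fin d) (Φ : EuclideanSpace ℂ (V × Fin d)) :
    EuclideanSpace ℂ (V × Fin d) :=
  WithLp.toLp 2 (fun x => coinOp Φ (σ x))

/-- The normalized adjacency matrix entry `A(u,v) = |{g : (σ(u,g)).1 = v}| / d`. -/
noncomputable def adjEntry {V : Type*} [Fintype V] [DecidableEq V] {d : ℕ}
    (σ : V × Fin d → V × Fin d) (u v : V) : ℝ :=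
  (Finset.univ.filter (fun g : Fin d => (σ (u, g)).1 = v)).card / d

/-! Suppose `⟪ψ_u, Φ⟫ = a u` for all `u`. Then `(WΦ)(x) = 2 a(σ(x).1)/√d - Φ(σ x)`, and since `σ` is an
involution, `WΦ = zΦ` forces `Φ x = 2 (a(x.1) - z a(σ(x).1)) / (√d (1 - z²))`. Conversely, if `a` is an
eigenvector of the normalized adjacency matrix with eigenvalue `c`, this `Φ` does have overlaps `a u`
as soon as `z² - 2cz + 1 = 0`, because summing `a(σ(u,g).1)` over `g` gives `d c a u`. For `c = cos φ`
the roots are `e^{±iφ}`, and `z² ≠ 1` because `sin φ ≠ 0`. -/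

open Finset

section FlipFlopWalk

variable {V : Type*} [Fintype V] [DecidableEq V] {d : ℕ}

lemma psiState_apply (u : V) (x : V × Fin d) :
    psiState V d u x = if x.1 = u then ((1 / Real.sqrt d : ℝ) : ℂ) else 0 := rfl

lemma inner_psiState (u : V) (Φ : EuclideanSpace ℂ (V × Fin d)) :
    ⟪psiState V d u, Φ⟫_ℂ = ((1 / Real.sqrt d : ℝ) : ℂ) * ∑ g, Φ (u, g) := by
  rw [PiLp.inner_apply, Fintype.sum_prod_type, Fintype.sum_eq_single u, mul_sum]
  · simp [psiState_apply, mul_comm]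
  · intro v hv
    simp [psiState_apply, hv]

lemma coinOp_apply (Φ : EuclideanSpace ℂ (V × Fin d)) (y : V × Fin d) :
    coinOp Φ y = 2 * (((1 / Real.sqrt d : ℝ) : ℂ) * ⟪psiState V d y.1, Φ⟫_ℂ) - Φ y := by
  simp [coinOp, psiState_apply, WithLp.ofLp_sum, Finset.sum_apply, mul_comm]

lemma sum_fst_rotation_eq_mul_sum_adjEntry (σ : V × Fin d → V × Fin d) (a : V → ℝ) (u : V) :
    ∑ g, a (σ (u, g)).1 = d * ∑ v, adjEntry σ u v * a v := by
  rcases eq_or_ne d 0 with rfl | hd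
  · simp
  rw [← sum_fiberwise' univ (fun g => (σ (u, g)).1) a, mul_sum]
  refine sum_congr rfl fun v _ => ?_
  rw [sum_const, nsmul_eq_mul, adjEntry]
  field_simp

noncomputable def walkEigenvector (σ : V × Fin d → V × Fin d) (a : V → ℝ) (z : ℂ) :
    EuclideanSpace ℂ (V × Fin d) :=
  WithLp.toLp 2 fun x => ((1 / Real.sqrt d : ℝ) : ℂ) * (2 * (a x.1 - z * a (σ x).1) / (1 - z ^ 2))

variable {σ : V × Fin d → V × Fin d} {a : V → ℝ} {z : ℂ}

lemma inner_psiState_walkEigenvector (hd : d ≠ 0) {c : ℝ}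
    (heig : ∀ u, ∑ v, adjEntry σ u v * a v = c * a u) (hz : z ^ 2 + 1 = 2 * c * z)
    (hz1 : z ^ 2 ≠ 1) (u : V) :
    ⟪psiState V d u, walkEigenvector σ a z⟫_ℂ = a u := by
  have hsum : ∑ g, (a (σ (u, g)).1 : ℂ) = d * (c * a u) := by
    exact_mod_cast (sum_fst_rotation_eq_mul_sum_adjEntry σ a u).trans (by rw [heig])
  have hsqrt : ((Real.sqrt d : ℝ) : ℂ) ^ 2 = d := by
    rw [← Complex.ofReal_pow, Real.sq_sqrt (Nat.cast_nonneg d), Complex.ofReal_natCast]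
  have hsqrt0 : ((Real.sqrt d : ℝ) : ℂ) ≠ 0 := by
    exact_mod_cast (Real.sqrt_pos.2 (Nat.cast_pos.2 (Nat.pos_of_ne_zero hd))).ne'
  have hz1' : 1 - z ^ 2 ≠ 0 := sub_ne_zero.2 (Ne.symm hz1)
  rw [inner_psiState]
  simp only [walkEigenvector, ← mul_sum, ← sum_div, sum_sub_distrib, sum_const,
    card_univ, Fintype.card_fin, nsmul_eq_mul, hsum, Complex.ofReal_div, Complex.ofReal_one]
  field_simp
  linear_combination (d : ℂ) * a u * hz - a u * (1 - z ^ 2) * hsqrt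

lemma walkOp_walkEigenvector (hσ : Function.Involutive σ) (hz1 : z ^ 2 ≠ 1)
    (hinner : ∀ u, ⟪psiState V d u, walkEigenvector σ a z⟫_ℂ = a u) :
    walkOp σ (walkEigenvector σ a z) = z • walkEigenvector σ a z := by
  have hz1' : 1 - z ^ 2 ≠ 0 := sub_ne_zero.2 (Ne.symm hz1)
  ext x
  simp only [walkOp, coinOp_apply, hinner, PiLp.smul_apply, smul_eq_mul]
  simp only [walkEigenvector, hσ x, Complex.ofReal_div, Complex.ofReal_one]
  field_simp
  ring

theorem exists_walkOp_eigenvector_of_adjEntry_eigenvector (hd : d ≠ 0)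
    (hσ : Function.Involutive σ) (ha : a ≠ 0) {c : ℝ}
    (heig : ∀ u, ∑ v, adjEntry σ u v * a v = c * a u) (hz : z ^ 2 + 1 = 2 * c * z)
    (hz1 : z ^ 2 ≠ 1) :
    ∃ Φ : EuclideanSpace ℂ (V × Fin d), Φ ≠ 0 ∧ walkOp σ Φ = z • Φ ∧
      ∀ u, ⟪psiState V d u, Φ⟫_ℂ = a u := by
  have hinner := inner_psiState_walkEigenvector hd heig hz hz1
  refine ⟨walkEigenvector σ a z, ?_, walkOp_walkEigenvector hσ hz1 hinner, hinner⟩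
  obtain ⟨u, hu⟩ := Function.ne_iff.1 ha
  intro h0
  have hu0 := hinner u
  rw [h0, inner_zero_right] at hu0
  exact hu (by exact_mod_cast hu0.symm)

end FlipFlopWalk

lemma Complex.exp_ofReal_mul_I_sq_add_one (θ : ℝ) :
    exp (θ * I) ^ 2 + 1 = 2 * Real.cos θ * exp (θ * I) := by
  rw [exp_mul_I, ofReal_cos]
  linear_combination -sin_sq_add_cos_sq (θ : ℂ) + sin (θ : ℂ) ^ 2 * I_sq

lemma Complex.exp_ofReal_mul_I_sq_ne_one {θ : ℝ} (h : Real.sin θ ≠ 0) :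
    exp (θ * I) ^ 2 ≠ 1 := by
  rw [← exp_nat_mul, Ne, exp_eq_one_iff]
  rintro ⟨n, hn⟩
  refine h (Real.sin_eq_zero_iff.2 ⟨n, ?_⟩)
  have h2 : ((2 * θ : ℝ) : ℂ) * I = ((n * (2 * Real.pi) : ℝ) : ℂ) * I := by
    push_cast at hn ⊢
    linear_combination hn
  linarith [ofReal_injective (mul_right_cancel₀ I_ne_zero h2)]

theorem adjacency_eigenvector_gives_walk_eigenvectors_general
    {V : Type*} [Fintype V] [DecidableEq V] {d : ℕ} (hd : 1 ≤ d)
    (σ : V × Fin d → V × Fin d) (hσ : ∀ x, σ (σ x) = x)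
    (a : V → ℝ) (ha : a ≠ 0) (φ : ℝ) (hφ0 : 0 < φ) (hφπ : φ < Real.pi)
    (heig : ∀ u : V, ∑ v : V, adjEntry σ u v * a v = Real.cos φ * a u) :
    (∃ Φ : EuclideanSpace ℂ (V × Fin d), Φ ≠ 0 ∧
        walkOp σ Φ = Complex.exp (φ * Complex.I) • Φ ∧
        ∀ u : V, ⟪psiState V d u, Φ⟫_ℂ = (a u : ℂ)) ∧
    (∃ Φ' : EuclideanSpace ℂ (V × Fin d), Φ' ≠ 0 ∧
        walkOp σ Φ' = Complex.exp (-(φ * Complex.I)) • Φ' ∧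
        ∀ u : V, ⟪psiState V d u, Φ'⟫_ℂ = (a u : ℂ)) := by
  have hd0 : d ≠ 0 := Nat.one_le_iff_ne_zero.1 hd
  have hsin : Real.sin φ ≠ 0 := (Real.sin_pos_of_pos_of_lt_pi hφ0 hφπ).ne'
  have hneg : -(φ * Complex.I) = ((-φ : ℝ) : ℂ) * Complex.I := by push_cast; ring
  constructor
  · exact exists_walkOp_eigenvector_of_adjEntry_eigenvector hd0 hσ ha heig
      (Complex.exp_ofReal_mul_I_sq_add_one φ) (Complex.exp_ofReal_mul_I_sq_ne_one hsin)
  · rw [hneg]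
    exact exists_walkOp_eigenvector_of_adjEntry_eigenvector hd0 hσ ha (c := Real.cos (-φ))
      (by simpa only [Real.cos_neg] using heig) (Complex.exp_ofReal_mul_I_sq_add_one (-φ))
      (Complex.exp_ofReal_mul_I_sq_ne_one (by simpa only [Real.sin_neg, neg_ne_zero]))

/-- (Converse) If `a : V → ℝ` is a nonzero eigenvector of the normalized
adjacency matrix with eigenvalue `cos φ`, `0 < φ < π`, and `σ` has no fixed points, then there
are nonzero eigenvectors of `W` with eigenvalues `e^{iφ}` and `e^{−iφ}` whose overlaps with the
coin states `ψ_u` are the `a_u`. -/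
theorem adjacency_eigenvector_gives_walk_eigenvectors
    {V : Type*} [Fintype V] [DecidableEq V] [Nonempty V] {d : ℕ} (hd : 1 ≤ d)
    (σ : V × Fin d → V × Fin d) (hσ : ∀ x, σ (σ x) = x) (hfix : ∀ x, σ x ≠ x)
    (a : V → ℝ) (ha : a ≠ 0) (φ : ℝ) (hφ0 : 0 < φ) (hφπ : φ < Real.pi)
    (heig : ∀ u : V, ∑ v : V, adjEntry σ u v * a v = Real.cos φ * a u) :
    (∃ Φ : EuclideanSpace ℂ (V × Fin d), Φ ≠ 0 ∧
        walkOp σ Φ = Complex.exp (φ * Complex.I) • Φ ∧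
        ∀ u : V, ⟪psiState V d u, Φ⟫_ℂ = (a u : ℂ)) ∧
    (∃ Φ' : EuclideanSpace ℂ (V × Fin d), Φ' ≠ 0 ∧
        walkOp σ Φ' = Complex.exp (-(φ * Complex.I)) • Φ' ∧
        ∀ u : V, ⟪psiState V d u, Φ'⟫_ℂ = (a u : ℂ)) :=
  adjacency_eigenvector_gives_walk_eigenvectors_general hd σ hσ a ha φ hφ0 hφπ heig
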